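/- arXiv:2312.14716 — 2 statements merged into one kernel-verified Lean document; each statement's English description precedes it below -/
import Mathlib

section
/- For the lumped inner product of curl-pushforwards of vectorized Lagrange functions, ⟨ι^curl(ℓ⁽ⁱ'ʲ'ᵏ⁾), ι^curl(ℓ⁽ˡ'ᵐ'ⁿ⁾)⟩_K^P = wᵢ wⱼ δᵢₗ δⱼₘ (𝔾^K)_{kn}(ξᵢ,ξⱼ); hence after grouping degrees of freedom by quadrature node, the lumped mass matrix is block diagonal with 2×2 blocks. -/
open Matrix

/-- Lumped inner product of curl-pushforwards of vectorized tensorized Lagrange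
functions: ⟨ι^curl(ℓ⁽ⁱ'ʲ'ᵏ⁾), ι^curl(ℓ⁽ˡ'ᵐ'ⁿ⁾)⟩_K^P = wᵢ wⱼ δᵢₗ δⱼₘ (𝔾^K)_{kn}(ξᵢ,ξⱼ),
so grouping degrees of freedom by quadrature node, the lumped mass matrix is block
diagonal with 2×2 blocks. -/
theorem lumped_curl_orthogonality (P : ℕ) (ξ w : Fin (P + 1) → ℝ)
    (hξ : Function.Injective ξ)
    (ℓ : Fin (P + 1) → ℝ → ℝ)
    (hδ : ∀ i j, ℓ i (ξ j) = if i = j then 1 else 0)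
    (F : ℝ × ℝ ≃ ℝ × ℝ)
    (dF : ℝ × ℝ → Matrix (Fin 2) (Fin 2) ℝ)
    (hdet : ∀ p, (dF p).det ≠ 0)
    (ι : (ℝ × ℝ → Fin 2 → ℝ) → (ℝ × ℝ → Fin 2 → ℝ))
    (hι : ∀ vhat p, ι vhat p = ((dF (F.symm p))ᵀ)⁻¹ *ᵥ vhat (F.symm p))
    (L : Fin (P + 1) → Fin (P + 1) → Fin 2 → ℝ × ℝ → Fin 2 → ℝ)
    (hL : ∀ i j k p, L i j k p = (ℓ i p.1 * ℓ j p.2) • (Pi.single k 1 : Fin 2 → ℝ))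
    (G : ℝ × ℝ → Matrix (Fin 2) (Fin 2) ℝ)
    (hG : ∀ p, G p = (dF p).det • ((dF p)⁻¹ * ((dF p)ᵀ)⁻¹))
    (i j l m : Fin (P + 1)) (k n : Fin 2) :
    ∑ a, ∑ b, w a * w b * (dF (ξ a, ξ b)).det *
        (ι (L i j k) (F (ξ a, ξ b)) ⬝ᵥ ι (L l m n) (F (ξ a, ξ b))) =
      w i * w j * (if i = l then 1 else 0) * (if j = m then 1 else 0) *
        G (ξ i, ξ j) k n := by
  have key : ∀ a b, ι (L i j k) (F (ξ a, ξ b)) ⬝ᵥ ι (L l m n) (F (ξ a, ξ b)) =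
      ((if i = a then (1:ℝ) else 0) * (if j = b then 1 else 0)) *
      ((if l = a then (1:ℝ) else 0) * (if m = b then 1 else 0)) *
      ((((dF (ξ a, ξ b))ᵀ)⁻¹ *ᵥ Pi.single k 1) ⬝ᵥ
        (((dF (ξ a, ξ b))ᵀ)⁻¹ *ᵥ Pi.single n 1)) := by
    intro a b
    rw [hι, hι, Equiv.symm_apply_apply, hL, hL]
    simp only [hδ, Matrix.mulVec_smul, smul_dotProduct, dotProduct_smul, smul_eq_mul]
    ring
  have hdp : ∀ a b, (((dF (ξ a, ξ b))ᵀ)⁻¹ *ᵥ Pi.single k 1) ⬝ᵥ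
      (((dF (ξ a, ξ b))ᵀ)⁻¹ *ᵥ Pi.single n 1) =
      ((dF (ξ a, ξ b))⁻¹ * ((dF (ξ a, ξ b))ᵀ)⁻¹) k n := by
    intro a b
    rw [← Matrix.transpose_nonsing_inv]
    fin_cases k <;> fin_cases n <;>
      simp [Matrix.mulVec, Matrix.mul_apply, dotProduct, Fin.sum_univ_two,
        Matrix.transpose_apply] <;> ring
  simp_rw [key, hdp]
  rw [Finset.sum_eq_single_of_mem i (Finset.mem_univ i), Finset.sum_eq_single_of_mem j (Finset.mem_univ j)]
  · rw [hG]
    by_cases hil : i = l <;> by_cases hjm : j = m <;>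
      simp [hil, hjm, eq_comm, Matrix.smul_apply, smul_eq_mul] <;> ring
  · intro b _ hb
    simp [Ne.symm hb]
  · intro a _ ha
    simp [Ne.symm ha]
end

section
/- For the leapfrog scheme hⁿ⁺¹ᐟ² = hⁿ⁻¹ᐟ² − Δt A e ⁿ, eⁿ⁺¹ = eⁿ + Δt B hⁿ⁺¹ᐟ² with B = M_ε⁻¹ Cᵀ, A = M_μ⁻¹ C and M_ε, M_μ symmetric positive definite, the discrete energy E ⁿ := (eⁿ)ᵀ M_ε eⁿ + (hⁿ⁺¹ᐟ²)ᵀ M_μ hⁿ⁻¹ᐟ² is conserved: Eⁿ⁺¹ = Eⁿ for all n. -/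
/-!
Both energy increments reduce to the same pairing. By symmetry of `M_ε`, the change of the
electric energy is `(eⁿ⁺¹ - eⁿ)ᵀ M_ε (eⁿ⁺¹ + eⁿ) = Δt (hⁿ⁺¹ᐟ²)ᵀ C (eⁿ⁺¹ + eⁿ)`. By symmetry of
`M_μ`, the change of the mixed magnetic energy is `(hⁿ⁺¹ᐟ²)ᵀ M_μ (hⁿ⁺³ᐟ² - hⁿ⁻¹ᐟ²)`, and two
`h`-steps make this `-Δt (hⁿ⁺¹ᐟ²)ᵀ C (eⁿ⁺¹ + eⁿ)`.
-/

open Matrix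

namespace Matrix

variable {R ι κ : Type*} [CommRing R] [Fintype ι] [Fintype κ]

theorem IsSymm.dotProduct_mulVec_comm {M : Matrix ι ι R} (hM : M.IsSymm) (x y : ι → R) :
    x ⬝ᵥ M *ᵥ y = y ⬝ᵥ M *ᵥ x := by
  rw [dotProduct_mulVec, ← mulVec_transpose, hM.eq, dotProduct_comm]

theorem IsSymm.dotProduct_mulVec_self_sub {M : Matrix ι ι R} (hM : M.IsSymm) (x y : ι → R) :
    x ⬝ᵥ M *ᵥ x - y ⬝ᵥ M *ᵥ y = (x - y) ⬝ᵥ M *ᵥ (x + y) := by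
  simp only [mulVec_add, dotProduct_add, sub_dotProduct, hM.dotProduct_mulVec_comm x y]
  ring

theorem mulVec_nonsing_inv_mul_mulVec [DecidableEq ι] {M : Matrix ι ι R} (hM : IsUnit M.det)
    (C : Matrix ι κ R) (x : κ → R) : M *ᵥ ((M⁻¹ * C) *ᵥ x) = C *ᵥ x := by
  rw [mulVec_mulVec, mul_nonsing_inv_cancel_left _ _ hM]

end Matrix

section Leapfrog

variable {R ι κ : Type*} [CommRing R] [Fintype ι] [Fintype κ]

theorem leapfrog_electric_energy_sub [DecidableEq ι] {Mε : Matrix ι ι R} (hsymm : Mε.IsSymm)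
    (hdet : IsUnit Mε.det) (C : Matrix κ ι R) (Δt : R) {e₁ e₂ : ι → R} (h₁ : κ → R)
    (hstep : e₂ = e₁ + Δt • ((Mε⁻¹ * Cᵀ) *ᵥ h₁)) :
    e₂ ⬝ᵥ Mε *ᵥ e₂ - e₁ ⬝ᵥ Mε *ᵥ e₁ = Δt * (h₁ ⬝ᵥ C *ᵥ (e₂ + e₁)) := by
  have hdiff : e₂ - e₁ = Δt • ((Mε⁻¹ * Cᵀ) *ᵥ h₁) := by rw [hstep, add_sub_cancel_left]
  rw [hsymm.dotProduct_mulVec_self_sub, hdiff, smul_dotProduct, hsymm.dotProduct_mulVec_comm,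
    mulVec_nonsing_inv_mul_mulVec hdet, mulVec_transpose, dotProduct_comm, ← dotProduct_mulVec,
    smul_eq_mul]

theorem leapfrog_magnetic_energy_sub [DecidableEq κ] {Mμ : Matrix κ κ R} (hsymm : Mμ.IsSymm)
    (hdet : IsUnit Mμ.det) (C : Matrix κ ι R) (Δt : R) {h₀ h₁ h₂ : κ → R} {e₁ e₂ : ι → R}
    (hprev : h₁ = h₀ - Δt • ((Mμ⁻¹ * C) *ᵥ e₁))
    (hnext : h₂ = h₁ - Δt • ((Mμ⁻¹ * C) *ᵥ e₂)) :
    h₂ ⬝ᵥ Mμ *ᵥ h₁ - h₁ ⬝ᵥ Mμ *ᵥ h₀ = -(Δt * (h₁ ⬝ᵥ C *ᵥ (e₂ + e₁))) := by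
  have hdiff : h₂ - h₀ = -(Δt • ((Mμ⁻¹ * C) *ᵥ (e₂ + e₁))) := by
    rw [hnext, hprev, mulVec_add, smul_add]
    abel
  rw [hsymm.dotProduct_mulVec_comm h₂, ← dotProduct_sub, ← mulVec_sub, hdiff, mulVec_neg,
    mulVec_smul, mulVec_nonsing_inv_mul_mulVec hdet, dotProduct_neg, dotProduct_smul, smul_eq_mul]

end Leapfrog

/-- The leapfrog scheme h^{n+1/2} = h^{n-1/2} − Δt M_μ⁻¹ C eⁿ,
e^{n+1} = eⁿ + Δt M_ε⁻¹ Cᵀ h^{n+1/2} conserves the discrete energy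
Eⁿ = (eⁿ)ᵀ M_ε eⁿ + (h^{n+1/2})ᵀ M_μ h^{n-1/2}. -/
theorem leapfrog_energy_conservation {m n : ℕ}
    (C : Matrix (Fin m) (Fin n) ℝ)
    (Mε : Matrix (Fin n) (Fin n) ℝ) (Mμ : Matrix (Fin m) (Fin m) ℝ)
    (hMε : Mε.PosDef) (hMμ : Mμ.PosDef)
    (Δt : ℝ)
    (e : ℕ → Fin n → ℝ) (h : ℕ → Fin m → ℝ)  -- h N represents h^{N+1/2}
    (hstep_h : ∀ N, h (N + 1) = h N - Δt • ((Mμ⁻¹ * C) *ᵥ e (N + 1)))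
    (hstep_e : ∀ N, e (N + 1) = e N + Δt • ((Mε⁻¹ * Cᵀ) *ᵥ h N))
    (E : ℕ → ℝ)
    (hE : ∀ N, E N = e N ⬝ᵥ (Mε *ᵥ e N) + h N ⬝ᵥ (Mμ *ᵥ h (N - 1))) :
    ∀ N, 1 ≤ N → E (N + 1) = E N := by
  intro N hN
  obtain ⟨K, rfl⟩ := Nat.exists_eq_add_of_le' hN
  have helectric := leapfrog_electric_energy_sub (isHermitian_iff_isSymm.mp hMε.isHermitian)
    hMε.det_pos.ne'.isUnit C Δt (h (K + 1)) (hstep_e (K + 1))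
  have hmagnetic := leapfrog_magnetic_energy_sub (isHermitian_iff_isSymm.mp hMμ.isHermitian)
    hMμ.det_pos.ne'.isUnit C Δt (hstep_h K) (hstep_h (K + 1))
  rw [hE, hE, Nat.add_sub_cancel, Nat.add_sub_cancel]
  linarith
end
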